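/- arXiv:1005.4904 — 4 statements merged into one kernel-verified Lean document; each statement's English description precedes it below -/
import Mathlib

section
/- Let S(C, P, α, ν) be a polynomial mapping scheme of degree d and let Ω ⊆ Z \ C with α(Ω) = Ω. If #(α⁻¹(Ω) \ Ω) ≤ Σ_{z ∈ C \ {∞}, α(z) ∉ Ω} (ν(z) − 1), then Σ_{z ∉ Ω, α(z) ∈ Ω} ν(z) ≤ d − 1. -/
/-- A polynomial mapping scheme of degree `d`: `Z = C ∪ P` finite, `α : Z → P` surjective,
`ν : Z → ℕ` with `ν⁻¹({n ≥ 2}) = C`, satisfying Riemann-Hurwitz, the local degree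
conditions, and having a fixed point `∞ ∈ C` with `ν ∞ = d`. -/
structure PolyMapScheme (Z : Type*) [Fintype Z] [DecidableEq Z] where
  C : Finset Z
  P : Finset Z
  α : Z → Z
  ν : Z → ℕ
  d : ℕ
  union_eq : C ∪ P = Finset.univ
  maps_to_P : ∀ z, α z ∈ P
  surj : ∀ p ∈ P, ∃ z, α z = p
  crit_iff : ∀ z, 2 ≤ ν z ↔ z ∈ C
  nu_pos : ∀ z, 1 ≤ ν z
  d_pos : 1 ≤ d
  riemann_hurwitz : ∑ z, (ν z - 1) = 2 * (d - 1)
  local_deg : ∀ z, ∑ x ∈ Finset.univ.filter (fun x => α x = z), ν x ≤ d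
  infty : Z
  infty_crit : infty ∈ C
  infty_fixed : α infty = infty
  nu_infty : ν infty = d

/-- If `Ω ⊆ Z \ C` with `α(Ω) = Ω` and `#(α⁻¹(Ω) \ Ω) ≤ Σ_{z ∈ C \ {∞}, α(z) ∉ Ω} (ν(z) − 1)`,
then `Σ_{z ∉ Ω, α(z) ∈ Ω} ν(z) ≤ d − 1`. -/
theorem stmt_1 {Z : Type*} [Fintype Z] [DecidableEq Z] (S : PolyMapScheme Z)
    (Ω : Finset Z) (hΩC : ∀ z ∈ Ω, z ∉ S.C)
    (hinv : Finset.image S.α Ω = Ω)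
    (hcount : (Finset.univ.filter (fun z => S.α z ∈ Ω ∧ z ∉ Ω)).card ≤
      ∑ z ∈ (S.C.erase S.infty).filter (fun z => S.α z ∉ Ω), (S.ν z - 1)) :
    ∑ z ∈ Finset.univ.filter (fun z => z ∉ Ω ∧ S.α z ∈ Ω), S.ν z ≤ S.d - 1 := by
  classical
  set A := Finset.univ.filter (fun z => z ∉ Ω ∧ S.α z ∈ Ω) with hA
  have hinf_notΩ : S.infty ∉ Ω := fun h => hΩC _ h S.infty_crit
  have hsumC : ∑ z ∈ S.C, (S.ν z - 1) = 2 * (S.d - 1) := by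
    rw [← S.riemann_hurwitz]
    refine Finset.sum_subset (Finset.subset_univ _) ?_
    intro x _ hx
    have h : ¬ 2 ≤ S.ν x := fun h2 => hx ((S.crit_iff x).mp h2)
    omega
  have herase : (S.ν S.infty - 1) + ∑ z ∈ S.C.erase S.infty, (S.ν z - 1)
      = ∑ z ∈ S.C, (S.ν z - 1) := Finset.add_sum_erase S.C (fun z => S.ν z - 1) S.infty_crit
  have hE : ∑ z ∈ S.C.erase S.infty, (S.ν z - 1) = S.d - 1 := by
    have h1 := S.nu_infty; have h2 := S.d_pos; omega
  have hsplit : ∑ z ∈ (S.C.erase S.infty).filter (fun z => S.α z ∈ Ω), (S.ν z - 1)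
      + ∑ z ∈ (S.C.erase S.infty).filter (fun z => S.α z ∉ Ω), (S.ν z - 1)
      = S.d - 1 := by
    rw [Finset.sum_filter_add_sum_filter_not]; exact hE
  have hcard : A.card ≤
      ∑ z ∈ (S.C.erase S.infty).filter (fun z => S.α z ∉ Ω), (S.ν z - 1) := by
    refine le_trans (le_of_eq ?_) hcount
    congr 1
    ext z
    simp [hA, and_comm]
  have hsub : ∑ z ∈ A, (S.ν z - 1) ≤
      ∑ z ∈ (S.C.erase S.infty).filter (fun z => S.α z ∈ Ω), (S.ν z - 1) := by
    apply Finset.sum_le_sum_of_ne_zero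
    intro x hx hne
    simp only [hA, Finset.mem_filter, Finset.mem_univ, true_and] at hx
    have hxC : x ∈ S.C := (S.crit_iff x).mp (by omega)
    have hxne : x ≠ S.infty := by
      rintro rfl
      rw [S.infty_fixed] at hx
      exact hinf_notΩ hx.2
    simp [Finset.mem_erase, hxne, hxC, hx.2]
  have hsum : ∑ z ∈ A, S.ν z = ∑ z ∈ A, (S.ν z - 1) + A.card := by
    rw [Finset.sum_congr rfl
      (fun x _ => (by have := S.nu_pos x; omega : S.ν x = (S.ν x - 1) + 1))]
    rw [Finset.sum_add_distrib, Finset.sum_const, smul_eq_mul, mul_one]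
  calc ∑ z ∈ A, S.ν z = _ := hsum
    _ ≤ _ := Nat.add_le_add hsub hcard
    _ = S.d - 1 := hsplit
end

section
/- In a polynomial mapping scheme of degree d ≥ 2, if Ω ⊆ Z is a forward-invariant set (α(Ω) ⊆ Ω) disjoint from C, then the number of elements z ∉ Ω with α(z) ∈ Ω is at most d − 1. -/
/-!
Let `T` be the set of points outside `Ω ∪ {∞}` and `E ⊆ T` the set of points entering `Ω`
(`∞ ∉ E` since `∞` is a fixed point outside `Ω`). Every non-critical point of `T` has, by
surjectivity of `α` onto `P`, a preimage; by forward invariance of `Ω` and since `∞` is fixed,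
this preimage lies in `T \ E`. Hence `#(T ∩ P) ≤ #T - #E`, i.e. `#E ≤ #(T \ P)`, and `T \ P`
consists of critical points other than `∞`, of which there are at most
`∑_{z ≠ ∞} (ν z - 1) = d - 1` by Riemann-Hurwitz.
-/

open Finset

theorem Finset.card_le_card_sdiff_of_surjOn {α : Type*} [DecidableEq α] {f : α → α}
    {T E Q : Finset α} (hE : E ⊆ T) (hf : Set.SurjOn f ↑(T \ E) ↑(T ∩ Q)) :
    #E ≤ #(T \ Q) := by
  have hcount := card_le_card_of_surjOn f hf
  rw [card_sdiff_of_subset hE] at hcount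
  have hsplit := card_inter_add_card_sdiff T Q
  have := card_le_card hE
  omega

namespace PolyMapScheme

variable {Z : Type*} [Fintype Z] [DecidableEq Z] (S : PolyMapScheme Z)

theorem mem_C_of_notMem_P {z : Z} (hz : z ∉ S.P) : z ∈ S.C := by
  have hz' : z ∈ S.C ∪ S.P := S.union_eq ▸ mem_univ z
  simpa [hz] using hz'

theorem card_C_erase_infty_le : #(S.C.erase S.infty) ≤ S.d - 1 := by
  have hcrit : #(S.C.erase S.infty) ≤ ∑ z ∈ S.C.erase S.infty, (S.ν z - 1) := by
    rw [card_eq_sum_ones]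
    refine sum_le_sum fun z hz => ?_
    have := (S.crit_iff z).mpr (mem_of_mem_erase hz)
    omega
  have hsub : ∑ z ∈ S.C.erase S.infty, (S.ν z - 1) ≤ ∑ z ∈ univ.erase S.infty, (S.ν z - 1) :=
    sum_le_sum_of_subset (erase_subset_erase _ (subset_univ _))
  have hRH := S.riemann_hurwitz
  rw [← sum_erase_add _ _ (mem_univ S.infty), S.nu_infty] at hRH
  omega

end PolyMapScheme

theorem stmt_3_general {Z : Type*} [Fintype Z] [DecidableEq Z] (S : PolyMapScheme Z)
    (Ω : Finset Z) (hΩC : ∀ z ∈ Ω, z ∉ S.C)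
    (hinv : ∀ z ∈ Ω, S.α z ∈ Ω) :
    (Finset.univ.filter (fun z => z ∉ Ω ∧ S.α z ∈ Ω)).card ≤ S.d - 1 := by
  have hinfty : S.infty ∉ Ω := fun h => hΩC _ h S.infty_crit
  set E := univ.filter (fun z => z ∉ Ω ∧ S.α z ∈ Ω)
  set T := (insert S.infty Ω)ᶜ
  have hE : E ⊆ T := by
    intro z hz
    simp only [E, T, mem_filter, mem_univ, true_and, mem_compl, mem_insert, not_or] at hz ⊢
    refine ⟨fun h => hinfty ?_, hz.1⟩
    simpa [h, S.infty_fixed] using hz.2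
  have hsurj : Set.SurjOn S.α ↑(T \ E) ↑(T ∩ S.P) := by
    intro p hp
    simp only [T, coe_inter, coe_compl, coe_insert, Set.mem_inter_iff, Set.mem_compl_iff,
      Set.mem_insert_iff, mem_coe, not_or] at hp
    obtain ⟨⟨hpinfty, hpΩ⟩, hpP⟩ := hp
    obtain ⟨y, rfl⟩ := S.surj _ hpP
    refine ⟨y, ?_, rfl⟩
    simp only [E, T, coe_sdiff, coe_compl, coe_insert, coe_filter, Set.mem_sdiff, Set.mem_compl_iff,
      Set.mem_insert_iff, mem_coe, not_or, Set.mem_ofPred_eq, mem_univ, true_and, not_and]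
    exact ⟨⟨fun h => hpinfty (h ▸ S.infty_fixed), fun h => hpΩ (hinv y h)⟩, fun _ => hpΩ⟩
  calc _ ≤ #(T \ S.P) := card_le_card_sdiff_of_surjOn hE hsurj
    _ ≤ #(S.C.erase S.infty) := card_le_card fun z hz => by
        simp only [T, mem_sdiff, mem_compl, mem_insert, not_or] at hz
        exact mem_erase.mpr ⟨hz.1.1, S.mem_C_of_notMem_P hz.2⟩
    _ ≤ S.d - 1 := S.card_C_erase_infty_le

/-- In a polynomial mapping scheme of degree `d ≥ 2`, if `Ω ⊆ Z` is forward-invariant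
(`α(Ω) ⊆ Ω`) and disjoint from `C`, then the number of `z ∉ Ω` with `α(z) ∈ Ω` is at
most `d − 1`. -/
theorem stmt_3 {Z : Type*} [Fintype Z] [DecidableEq Z] (S : PolyMapScheme Z)
    (hd : 2 ≤ S.d) (Ω : Finset Z) (hΩC : ∀ z ∈ Ω, z ∉ S.C)
    (hinv : ∀ z ∈ Ω, S.α z ∈ Ω) :
    (Finset.univ.filter (fun z => z ∉ Ω ∧ S.α z ∈ Ω)).card ≤ S.d - 1 :=
  stmt_3_general S Ω hΩC hinv
end

section
/- The tensor product of two covering bimodules is a covering bimodule: if M₁ is a covering (G₁–G₂)-bimodule and M₂ is a covering (G₂–G₃)-bimodule, then M₁ ⊗ M₂ is a covering (G₁–G₃)-bimodule. -/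
/-- A permutational `(G–H)`-bimodule: a set `M` with a left `G`-action and a right
`H`-action which commute. -/
structure PermBimodule (G H : Type*) [Group G] [Group H] (M : Type*) where
  smul : G → M → M
  act : M → H → M
  one_smul : ∀ m, smul 1 m = m
  mul_smul : ∀ g₁ g₂ m, smul (g₁ * g₂) m = smul g₁ (smul g₂ m)
  act_one : ∀ m, act m 1 = m
  act_mul : ∀ m h₁ h₂, act m (h₁ * h₂) = act (act m h₁) h₂
  smul_act : ∀ g m h, smul g (act m h) = act (smul g m) h

/-- A bimodule is covering if the right action is free with finitely many orbits. -/
def PermBimodule.IsCovering {G H M : Type*} [Group G] [Group H]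
    (B : PermBimodule G H M) : Prop :=
  (∀ m h, B.act m h = m → h = 1) ∧
  ∃ s : Set M, s.Finite ∧ ∀ m : M, ∃ x ∈ s, ∃ h, m = B.act x h

/-- The relation defining the tensor product of bimodules: `(x₁ · g) ⊗ x₂ = x₁ ⊗ (g · x₂)`. -/
def tensorRel {G₁ G₂ G₃ M₁ M₂ : Type*} [Group G₁] [Group G₂] [Group G₃]
    (B₁ : PermBimodule G₁ G₂ M₁) (B₂ : PermBimodule G₂ G₃ M₂) :
    M₁ × M₂ → M₁ × M₂ → Prop :=
  fun p q => ∃ x₁ x₂ g, p = (B₁.act x₁ g, x₂) ∧ q = (x₁, B₂.smul g x₂)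

/-- An isomorphism of bimodules is a bijection commuting with both actions. -/
def BimoduleIso {G H M M' : Type*} [Group G] [Group H]
    (B : PermBimodule G H M) (B' : PermBimodule G H M') : Prop :=
  ∃ e : M ≃ M', (∀ g m, e (B.smul g m) = B'.smul g (e m)) ∧
    (∀ m h, e (B.act m h) = B'.act (e m) h)

/-- The `G`-bimodule `[α]` associated to an automorphism `α` of `G`: the set of
expressions `α · g` with `h_l · (α · g) · h_r = α · (α(h_l) g h_r)`. -/
def autBimodule {G : Type*} [Group G] (α : G ≃* G) : PermBimodule G G G where
  smul h m := α h * m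
  act m h := m * h
  one_smul m := by simp
  mul_smul g₁ g₂ m := by simp [mul_assoc]
  act_one m := by simp
  act_mul m h₁ h₂ := by simp [mul_assoc]
  smul_act g m h := by simp [mul_assoc]

/-- The tensor product of two covering bimodules is covering: if `B₁` is a covering
`(G₁–G₂)`-bimodule, `B₂` a covering `(G₂–G₃)`-bimodule, and `B₃` is a `(G₁–G₃)`-bimodule
structure on the tensor product `M₁ ⊗ M₂` whose actions are induced by those of `B₁` and
`B₂`, then `B₃` is covering. -/
theorem stmt_11 {G₁ G₂ G₃ M₁ M₂ : Type*} [Group G₁] [Group G₂] [Group G₃]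
    (B₁ : PermBimodule G₁ G₂ M₁) (B₂ : PermBimodule G₂ G₃ M₂)
    (h₁ : B₁.IsCovering) (h₂ : B₂.IsCovering)
    (B₃ : PermBimodule G₁ G₃ (Quot (tensorRel B₁ B₂)))
    (hsmul : ∀ g x y, B₃.smul g (Quot.mk _ (x, y)) = Quot.mk _ (B₁.smul g x, y))
    (hact : ∀ x y h, B₃.act (Quot.mk _ (x, y)) h = Quot.mk _ (x, B₂.act y h)) :
    B₃.IsCovering := by
  obtain ⟨free₁, s₁, hs₁, horb₁⟩ := h₁
  obtain ⟨free₂, s₂, hs₂, horb₂⟩ := h₂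
  have key : ∀ a b : M₁ × M₂, Quot.mk (tensorRel B₁ B₂) a = Quot.mk _ b →
      ∃ g, a.1 = B₁.act b.1 g ∧ b.2 = B₂.smul g a.2 := by
    intro a b hab
    have h := Quot.eqvGen_exact hab
    clear hab
    induction h with
    | rel x y hxy =>
        obtain ⟨x₁, x₂, g, hx, hy⟩ := hxy
        subst hx; subst hy
        exact ⟨g, rfl, rfl⟩
    | refl x => exact ⟨1, (B₁.act_one _).symm, (B₂.one_smul _).symm⟩
    | symm x y _ ih =>
        obtain ⟨g, hg1, hg2⟩ := ih
        refine ⟨g⁻¹, ?_, ?_⟩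
        · rw [hg1, ← B₁.act_mul, mul_inv_cancel, B₁.act_one]
        · rw [hg2, ← B₂.mul_smul, inv_mul_cancel, B₂.one_smul]
    | trans x y z _ _ ih₁ ih₂ =>
        obtain ⟨g, hg1, hg2⟩ := ih₁
        obtain ⟨g', hg1', hg2'⟩ := ih₂
        refine ⟨g' * g, ?_, ?_⟩
        · rw [hg1, hg1', B₁.act_mul]
        · rw [hg2', hg2, B₂.mul_smul]
  constructor
  · intro m h hm
    obtain ⟨⟨x, y⟩, rfl⟩ := Quot.exists_rep m
    rw [hact] at hm
    obtain ⟨g, hg1, hg2⟩ := key _ _ hm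
    have hg : g = 1 := free₁ _ _ hg1.symm
    rw [hg, B₂.one_smul] at hg2
    exact free₂ _ _ hg2.symm
  · refine ⟨(fun p => Quot.mk (tensorRel B₁ B₂) p) '' (s₁ ×ˢ s₂),
      (hs₁.prod hs₂).image _, ?_⟩
    intro m
    obtain ⟨⟨x, y⟩, rfl⟩ := Quot.exists_rep m
    obtain ⟨x₁, hx₁, g, hg⟩ := horb₁ x
    obtain ⟨x₂, hx₂, h, hh⟩ := horb₂ (B₂.smul g y)
    refine ⟨Quot.mk _ (x₁, x₂), ⟨(x₁, x₂), ⟨hx₁, hx₂⟩, rfl⟩, h, ?_⟩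
    rw [hact]
    subst hg
    have : Quot.mk (tensorRel B₁ B₂) (B₁.act x₁ g, y) =
        Quot.mk (tensorRel B₁ B₂) (x₁, B₂.smul g y) :=
      Quot.sound ⟨x₁, y, g, rfl, rfl⟩
    rw [this, hh]
end

section
/- Let S be a polynomial mapping scheme with two forward-invariant sets Ω₁, Ω₂ ⊆ Z \ C that are disjoint, with p_i = #(α⁻¹(Ω_i) \ Ω_i) and p₁ ≤ p₂. Then Ω₁ satisfies #(α⁻¹(Ω₁) \ Ω₁) ≤ Σ_{z ∈ C \ {∞}, α(z) ∉ Ω₁} (ν(z) − 1). -/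
/-!
Write `E(Ω) = α⁻¹(Ω) \ Ω`. If `α(Ω) = Ω`, counting `Z` as `α⁻¹(Ω) ⊔ α⁻¹(Z \ Ω)` and using that
every point of `P \ Ω` has a preimage outside `α⁻¹(Ω)` gives `#E(Ω) + #P ≤ #Z`, i.e.
`#E(Ω) ≤ #(C \ P)`. For disjoint invariant `Ω₁, Ω₂` the sets `E(Ω₁), E(Ω₂)` are disjoint with
union `E(Ω₁ ∪ Ω₂)`, so `p₁ + p₂ ≤ #(C \ P)`. The critical points outside `P` that map into `Ω₁`
lie in `E(Ω₁)`, so at most `p₁` of them; the others are counted by the sum of `ν - 1` over the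
critical points `z ≠ ∞` with `α z ∉ Ω₁`. Hence `p₂` is bounded by that sum, and so is `p₁ ≤ p₂`.
-/

open Finset

section EscapingPreimage

variable {Z : Type*} [Fintype Z] [DecidableEq Z]

/-- `f⁻¹(Ω) \ Ω`; for `Ω = Ωᵢ` its cardinality is the `pᵢ` of the statement. -/
def escapingPreimage (f : Z → Z) (Ω : Finset Z) : Finset Z :=
  univ.filter fun z => f z ∈ Ω ∧ z ∉ Ω

variable {f : Z → Z} {Ω Ω₁ Ω₂ : Finset Z}

@[simp]
theorem mem_escapingPreimage {z : Z} : z ∈ escapingPreimage f Ω ↔ f z ∈ Ω ∧ z ∉ Ω := by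
  simp [escapingPreimage]

theorem card_escapingPreimage_add_card (hf : Set.MapsTo f Ω Ω) :
    #(escapingPreimage f Ω) + #Ω = #(univ.filter fun z => f z ∈ Ω) := by
  have hsplit : univ.filter (fun z => f z ∈ Ω) = escapingPreimage f Ω ∪ Ω := by
    ext z
    by_cases hz : z ∈ Ω
    · simpa [hz] using hf hz
    · simp [hz]
  rw [hsplit, card_union_of_disjoint]
  exact disjoint_left.2 fun z hz => (mem_escapingPreimage.1 hz).2

theorem card_escapingPreimage_add_card_image_le (hΩ : Ω.image f = Ω) :
    #(escapingPreimage f Ω) + #(univ.image f) ≤ Fintype.card Z := by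
  have hsub : Ω ⊆ univ.image f := hΩ ▸ image_subset_image (subset_univ Ω)
  have houtside : #(univ.image f \ Ω) ≤ #(univ.filter fun z => f z ∉ Ω) := by
    rw [sdiff_eq_filter, filter_image]
    exact card_image_le
  have hpart := card_filter_add_card_filter_not (s := univ) (fun z => f z ∈ Ω)
  have himage := card_sdiff_add_card_eq_card hsub
  rw [card_univ] at hpart
  have := card_escapingPreimage_add_card (mapsTo_iff_image_subset.2 hΩ.le)
  omega

theorem escapingPreimage_union (hdisj : Disjoint Ω₁ Ω₂) (hf₁ : Set.MapsTo f Ω₁ Ω₁)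
    (hf₂ : Set.MapsTo f Ω₂ Ω₂) :
    escapingPreimage f (Ω₁ ∪ Ω₂) = escapingPreimage f Ω₁ ∪ escapingPreimage f Ω₂ := by
  ext z
  simp only [mem_escapingPreimage, mem_union, not_or]
  constructor
  · rintro ⟨h | h, hz₁, hz₂⟩
    exacts [Or.inl ⟨h, hz₁⟩, Or.inr ⟨h, hz₂⟩]
  · rintro (⟨h, hz₁⟩ | ⟨h, hz₂⟩)
    · exact ⟨Or.inl h, hz₁, fun hz₂ => disjoint_left.1 hdisj h (hf₂ hz₂)⟩
    · exact ⟨Or.inr h, fun hz₁ => disjoint_right.1 hdisj h (hf₁ hz₁), hz₂⟩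

theorem card_escapingPreimage_union (hdisj : Disjoint Ω₁ Ω₂) (hf₁ : Set.MapsTo f Ω₁ Ω₁)
    (hf₂ : Set.MapsTo f Ω₂ Ω₂) :
    #(escapingPreimage f (Ω₁ ∪ Ω₂)) = #(escapingPreimage f Ω₁) + #(escapingPreimage f Ω₂) := by
  rw [escapingPreimage_union hdisj hf₁ hf₂, card_union_of_disjoint]
  refine disjoint_left.2 fun z hz₁ hz₂ => ?_
  exact disjoint_left.1 hdisj (mem_escapingPreimage.1 hz₁).1 (mem_escapingPreimage.1 hz₂).1

theorem card_escapingPreimage_add_le_card_univ_sdiff_image (hdisj : Disjoint Ω₁ Ω₂)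
    (h₁ : Ω₁.image f = Ω₁) (h₂ : Ω₂.image f = Ω₂) :
    #(escapingPreimage f Ω₁) + #(escapingPreimage f Ω₂) ≤ #(univ \ univ.image f) := by
  rw [← card_escapingPreimage_union hdisj (mapsTo_iff_image_subset.2 h₁.le)
    (mapsTo_iff_image_subset.2 h₂.le), card_univ_sdiff]
  have := card_escapingPreimage_add_card_image_le (f := f) (Ω := Ω₁ ∪ Ω₂)
    (by rw [image_union, h₁, h₂])
  omega

end EscapingPreimage

namespace PolyMapScheme

variable {Z : Type*} [Fintype Z] [DecidableEq Z] (S : PolyMapScheme Z)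

theorem image_α_univ : univ.image S.α = S.P := by
  ext p
  simp only [mem_image, mem_univ, true_and]
  exact ⟨fun ⟨z, hz⟩ => hz ▸ S.maps_to_P z, S.surj p⟩

theorem univ_sdiff_P : univ \ S.P = S.C \ S.P := by
  rw [← S.union_eq, union_sdiff_right]

theorem infty_mem_P : S.infty ∈ S.P :=
  S.infty_fixed ▸ S.maps_to_P S.infty

theorem subset_P_of_image_eq {Ω : Finset Z} (hΩ : Ω.image S.α = Ω) : Ω ⊆ S.P :=
  hΩ ▸ image_subset_iff.2 fun z _ => S.maps_to_P z

theorem filter_C_sdiff_P_subset_escapingPreimage {Ω : Finset Z} (hΩ : Ω ⊆ S.P) :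
    (S.C \ S.P).filter (fun z => S.α z ∈ Ω) ⊆ escapingPreimage S.α Ω := fun z hz => by
  obtain ⟨hz, hα⟩ := mem_filter.1 hz
  exact mem_escapingPreimage.2 ⟨hα, fun h => (mem_sdiff.1 hz).2 (hΩ h)⟩

theorem card_filter_C_sdiff_P_le_sum (p : Z → Prop) [DecidablePred p] :
    #((S.C \ S.P).filter p) ≤ ∑ z ∈ (S.C.erase S.infty).filter p, (S.ν z - 1) := by
  calc #((S.C \ S.P).filter p)
      ≤ ∑ z ∈ (S.C \ S.P).filter p, (S.ν z - 1) := by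
        rw [card_eq_sum_ones]
        refine sum_le_sum fun z hz => ?_
        have := (S.crit_iff z).2 (mem_sdiff.1 (mem_filter.1 hz).1).1
        omega
    _ ≤ ∑ z ∈ (S.C.erase S.infty).filter p, (S.ν z - 1) := by
        refine sum_le_sum_of_subset (filter_subset_filter p fun z hz => ?_)
        obtain ⟨hzC, hzP⟩ := mem_sdiff.1 hz
        exact mem_erase.2 ⟨fun h => hzP (h ▸ S.infty_mem_P), hzC⟩

end PolyMapScheme

theorem stmt_17_general {Z : Type*} [Fintype Z] [DecidableEq Z] (S : PolyMapScheme Z)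
    (Ω₁ Ω₂ : Finset Z)
    (hdisj : Disjoint Ω₁ Ω₂)
    (hinv₁ : Finset.image S.α Ω₁ = Ω₁) (hinv₂ : Finset.image S.α Ω₂ = Ω₂)
    (hp : (Finset.univ.filter (fun z => S.α z ∈ Ω₁ ∧ z ∉ Ω₁)).card ≤
      (Finset.univ.filter (fun z => S.α z ∈ Ω₂ ∧ z ∉ Ω₂)).card) :
    (Finset.univ.filter (fun z => S.α z ∈ Ω₁ ∧ z ∉ Ω₁)).card ≤
      ∑ z ∈ (S.C.erase S.infty).filter (fun z => S.α z ∉ Ω₁), (S.ν z - 1) := by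
  change #(escapingPreimage S.α Ω₁) ≤ #(escapingPreimage S.α Ω₂) at hp
  change #(escapingPreimage S.α Ω₁) ≤ _
  have hescape := card_escapingPreimage_add_le_card_univ_sdiff_image hdisj hinv₁ hinv₂
  rw [S.image_α_univ, S.univ_sdiff_P,
    ← card_filter_add_card_filter_not (s := S.C \ S.P) (fun z => S.α z ∈ Ω₁)] at hescape
  have hinto := card_le_card (S.filter_C_sdiff_P_subset_escapingPreimage
    (S.subset_P_of_image_eq hinv₁))
  have hrest := S.card_filter_C_sdiff_P_le_sum fun z => S.α z ∉ Ω₁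
  omega

/-- If `Ω₁, Ω₂ ⊆ Z \ C` are disjoint forward-invariant sets (`α(Ωᵢ) = Ωᵢ`) with
`p₁ = #(α⁻¹(Ω₁) \ Ω₁) ≤ p₂ = #(α⁻¹(Ω₂) \ Ω₂)`, then
`#(α⁻¹(Ω₁) \ Ω₁) ≤ Σ_{z ∈ C \ {∞}, α(z) ∉ Ω₁} (ν(z) − 1)`. -/
theorem stmt_17 {Z : Type*} [Fintype Z] [DecidableEq Z] (S : PolyMapScheme Z)
    (Ω₁ Ω₂ : Finset Z)
    (hΩ₁C : ∀ z ∈ Ω₁, z ∉ S.C) (hΩ₂C : ∀ z ∈ Ω₂, z ∉ S.C)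
    (hdisj : Disjoint Ω₁ Ω₂)
    (hinv₁ : Finset.image S.α Ω₁ = Ω₁) (hinv₂ : Finset.image S.α Ω₂ = Ω₂)
    (hp : (Finset.univ.filter (fun z => S.α z ∈ Ω₁ ∧ z ∉ Ω₁)).card ≤
      (Finset.univ.filter (fun z => S.α z ∈ Ω₂ ∧ z ∉ Ω₂)).card) :
    (Finset.univ.filter (fun z => S.α z ∈ Ω₁ ∧ z ∉ Ω₁)).card ≤
      ∑ z ∈ (S.C.erase S.infty).filter (fun z => S.α z ∉ Ω₁), (S.ν z - 1) :=
  stmt_17_general S Ω₁ Ω₂ hdisj hinv₁ hinv₂ hp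
end
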